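/- Let μ be a finite positive Borel measure on the unit circle T with infinite support, and fix a sequence {w_n} ⊂ T; for each n let ζ_{0n}, …, ζ_{nn} ∈ T be the zeros of the para-orthogonal polynomial B_{n+1}(w_n,·) and L_n(f) the Lagrange interpolant at these zeros. If f is in the disk algebra and {P_n} is any sequence of polynomials with deg P_n ≤ n and max_{z∈T} |f(z) − P_n(z)| → 0, then ∫_T |L_n(f) − P_n|² dμ ≤ μ(T) · (max_{z∈T} |f(z) − P_n(z)|)², and consequently ∫_T |f − L_n(f)|² dμ → 0 as n → ∞. -/

import Mathlib

open MeasureTheory Polynomial Filter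
open scoped ComplexConjugate Topology

/-- The Christoffel kernel `K_n(w,z) = ∑_{j=0}^n conj(φ_j(w)) φ_j(z)`. -/
noncomputable def christoffelK (φ : ℕ → Polynomial ℂ) (n : ℕ) (w z : ℂ) : ℂ :=
  ∑ j ∈ Finset.range (n + 1), conj ((φ j).eval w) * (φ j).eval z

/-- The para-orthogonal polynomial `B_{n+1}(w,z) = (1 − conj(w) z) K_n(w,z)`. -/
noncomputable def paraOrtho (φ : ℕ → Polynomial ℂ) (n : ℕ) (w z : ℂ) : ℂ :=
  (1 - conj w * z) * christoffelK φ n w z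

/-- The `j`-th fundamental (Lagrange) polynomial for the nodes `ζ`:
`ℓ_{jn}(z) = K_n(z, ζ_{jn}) / K_n(ζ_{jn}, ζ_{jn})`.  Note that by Hermitian symmetry of the
kernel, `K_n(z, ζ) = conj (K_n(ζ, z))`; as a *polynomial* in `z` (of degree `n`, as in the
paper) the fundamental polynomial is `z ↦ K_n(ζ_{jn}, z) / K_n(ζ_{jn}, ζ_{jn})`, with
`K_n(ζ_{jn}, ζ_{jn}) = ∑_k |φ_k(ζ_{jn})|²` a positive real number. -/
noncomputable def ellFun (φ : ℕ → Polynomial ℂ) (n : ℕ) (ζ : Fin (n + 1) → ℂ)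
    (j : Fin (n + 1)) (z : ℂ) : ℂ :=
  christoffelK φ n (ζ j) z / christoffelK φ n (ζ j) (ζ j)

/-- The `n`-th Lagrange interpolation polynomial of `f` at the nodes `ζ`:
`L_n(f)(z) = ∑_{j=0}^n f(ζ_{jn}) ℓ_{jn}(z)`. -/
noncomputable def lagrangeInterp (φ : ℕ → Polynomial ℂ) (n : ℕ) (ζ : Fin (n + 1) → ℂ)
    (f : ℂ → ℂ) (z : ℂ) : ℂ :=
  ∑ j : Fin (n + 1), f (ζ j) * ellFun φ n ζ j z

/-!
Write `⟪p, q⟫ = ∫ conj p · q dμ` for polynomials. Orthonormality makes `K_n(a, ·)` reproducing on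
polynomials of degree `≤ n`, and multiplication by `z` is an isometry because `|z| = 1` on the
support of `μ`; hence `B = B_{n+1}(w, ·)` is orthogonal to `z q` whenever `deg q < n`. For a root
`ζ ∈ T` write `B = (z - ζ) g`: the identity `conj (z - ζ) = -conj ζ · conj z · (z - ζ)` on `T` makes
`g` orthogonal to every polynomial of degree `≤ n` vanishing at `ζ`, which forces
`K_n(ζ, ζ) g = g(ζ) K_n(ζ, ·)`. So `K_n(ζ_j, ·)` vanishes at the other nodes, the fundamental
polynomials `ℓ_j` are orthogonal in `L²(μ)`, and `∑ ℓ_j = 1` gives `∑ ‖ℓ_j‖² = μ(T)`. Since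
`L_n f - P_n = ∑ (f - P_n)(ζ_j) ℓ_j`, Pythagoras yields the estimate, and the limit follows from
`|f - L_n f|² ≤ 2 |f - P_n|² + 2 |L_n f - P_n|²`.
-/

section UnitCircle

variable {μ : Measure ℂ}

lemma ae_norm_eq_one (hμ : μ (Metric.sphere (0 : ℂ) 1)ᶜ = 0) : ∀ᵐ z ∂μ, ‖z‖ = 1 := by
  filter_upwards [mem_ae_iff.2 hμ] with z hz using mem_sphere_zero_iff_norm.1 hz

variable [IsFiniteMeasure μ]

lemma integrable_of_continuous (hμ : μ (Metric.sphere (0 : ℂ) 1)ᶜ = 0) {E : Type*}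
    [NormedAddCommGroup E] {u : ℂ → E} (hu : Continuous u) : Integrable u μ := by
  have hrestrict : μ.restrict (Metric.sphere 0 1) = μ :=
    Measure.restrict_eq_self_of_ae_mem (mem_ae_iff.2 hμ)
  simpa [IntegrableOn, hrestrict] using
    hu.continuousOn.integrableOn_compact (μ := μ) (isCompact_sphere (0 : ℂ) 1)

lemma mul_conj_eq_one {z : ℂ} (hz : ‖z‖ = 1) : z * conj z = 1 := by
  rw [Complex.mul_conj', hz]
  norm_num

variable (hμ : μ (Metric.sphere (0 : ℂ) 1)ᶜ = 0)
include hμ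

noncomputable def polyInner : ℂ[X] →ₗ⋆[ℂ] ℂ[X] →ₗ[ℂ] ℂ :=
  LinearMap.mk₂'ₛₗ (starRingEnd ℂ) (RingHom.id ℂ)
    (fun p q => ∫ z, conj (p.eval z) * q.eval z ∂μ)
    (fun p₁ p₂ q => by
      simp only [eval_add, map_add, add_mul]
      exact integral_add (integrable_of_continuous hμ (by fun_prop))
        (integrable_of_continuous hμ (by fun_prop)))
    (fun c p q => by
      simp only [eval_smul, smul_eq_mul, map_mul, mul_assoc]
      exact integral_const_mul _ _)
    (fun p q₁ q₂ => by
      simp only [eval_add, mul_add]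
      exact integral_add (integrable_of_continuous hμ (by fun_prop))
        (integrable_of_continuous hμ (by fun_prop)))
    (fun c p q => by
      simp only [eval_smul, smul_eq_mul, RingHom.id_apply, mul_left_comm _ c]
      exact integral_const_mul _ _)

lemma polyInner_apply (p q : ℂ[X]) :
    polyInner hμ p q = ∫ z, conj (p.eval z) * q.eval z ∂μ := rfl

lemma conj_polyInner (p q : ℂ[X]) : conj (polyInner hμ p q) = polyInner hμ q p := by
  simp only [polyInner_apply, ← integral_conj, map_mul, Complex.conj_conj, mul_comm]

lemma polyInner_X_mul_X_mul (p q : ℂ[X]) :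
    polyInner hμ (X * p) (X * q) = polyInner hμ p q := by
  refine integral_congr_ae ?_
  filter_upwards [ae_norm_eq_one hμ] with z hz
  simp only [eval_mul, eval_X, map_mul]
  linear_combination (conj (p.eval z) * q.eval z) * mul_conj_eq_one hz

lemma polyInner_X_sub_C_mul {ζ : ℂ} (hζ : ‖ζ‖ = 1) (p q : ℂ[X]) :
    polyInner hμ ((X - C ζ) * p) q = -conj ζ * polyInner hμ (X * p) ((X - C ζ) * q) := by
  rw [polyInner_apply, polyInner_apply, ← integral_const_mul]
  refine integral_congr_ae ?_
  filter_upwards [ae_norm_eq_one hμ] with z hz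
  simp only [eval_mul, eval_sub, eval_X, eval_C, map_mul, map_sub]
  linear_combination (conj (p.eval z) * q.eval z) *
    (conj ζ * mul_conj_eq_one hz - conj z * mul_conj_eq_one hζ)

lemma integral_norm_sq_eval (p : ℂ[X]) :
    ∫ z, ‖p.eval z‖ ^ 2 ∂μ = (polyInner hμ p p).re := by
  simp only [polyInner_apply, Complex.conj_mul', ← Complex.ofReal_pow, integral_complex_ofReal,
    Complex.ofReal_re]

lemma integral_norm_sq_eval_sum {ι : Type*} (s : Finset ι) (p : ι → ℂ[X])
    (h : (s : Set ι).Pairwise fun i j => polyInner hμ (p i) (p j) = 0) :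
    ∫ z, ‖(∑ i ∈ s, p i).eval z‖ ^ 2 ∂μ = ∑ i ∈ s, ∫ z, ‖(p i).eval z‖ ^ 2 ∂μ := by
  simp only [integral_norm_sq_eval hμ, map_sum, LinearMap.sum_apply, Complex.re_sum]
  refine Finset.sum_congr rfl fun i hi => ?_
  rw [Finset.sum_eq_single i (fun j hj hji => by rw [h hj hi hji, Complex.zero_re]) (absurd hi)]

end UnitCircle

section Kernel

variable {φ : ℕ → ℂ[X]}

noncomputable def kernelPoly (φ : ℕ → ℂ[X]) (n : ℕ) (a : ℂ) : ℂ[X] :=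
  ∑ k ∈ Finset.range (n + 1), conj ((φ k).eval a) • φ k

lemma eval_kernelPoly (n : ℕ) (a z : ℂ) : (kernelPoly φ n a).eval z = christoffelK φ n a z := by
  simp [kernelPoly, christoffelK, eval_finsetSum]

variable (hdeg : ∀ k, (φ k).degree = (k : ℕ))
include hdeg

lemma degree_kernelPoly_le (n : ℕ) (a : ℂ) : (kernelPoly φ n a).degree ≤ n := by
  refine (degree_sum_le _ _).trans (Finset.sup_le fun k hk => (degree_smul_le _ _).trans ?_)
  rw [hdeg]
  exact_mod_cast Finset.mem_range_succ_iff.1 hk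

lemma christoffelK_self_ne_zero (n : ℕ) (a : ℂ) : christoffelK φ n a a ≠ 0 := by
  have hφ0 : φ 0 ≠ 0 := fun h => by simpa [h] using hdeg 0
  have ha : (φ 0).eval a ≠ 0 := fun h => (degree_pos_of_root hφ0 h).ne' (by simpa using hdeg 0)
  have hre : 0 < (christoffelK φ n a a).re := by
    simp only [christoffelK, Complex.conj_mul', ← Complex.ofReal_pow, Complex.re_sum,
      Complex.ofReal_re]
    exact Finset.sum_pos' (fun k _ => by positivity)
      ⟨0, Finset.mem_range.2 n.succ_pos, by positivity⟩
  exact fun h => by simp [h] at hre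

variable {μ : Measure ℂ} [IsFiniteMeasure μ] (hμ : μ (Metric.sphere (0 : ℂ) 1)ᶜ = 0)
  (horth : ∀ k m, ∫ z, (φ k).eval z * conj ((φ m).eval z) ∂μ = if k = m then 1 else 0)
include hμ horth

omit hdeg in
lemma polyInner_orthonormal (j k : ℕ) :
    polyInner hμ (φ j) (φ k) = if j = k then 1 else 0 := by
  rw [polyInner_apply, if_congr eq_comm rfl rfl, ← horth]
  simp only [mul_comm]

lemma polyInner_kernelPoly {n : ℕ} (a : ℂ) {q : ℂ[X]} (hq : q.degree ≤ n) :
    polyInner hμ (kernelPoly φ n a) q = q.eval a := by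
  have hspan : q ∈ Submodule.span ℂ (φ '' Set.Iic n) := by
    rw [Sequence.span_degreeLE ⟨φ, hdeg⟩ fun i _ => ?_]
    · exact mem_degreeLE.2 hq
    · exact isUnit_iff_ne_zero.2 <|
        leadingCoeff_ne_zero.2 fun h : φ i = 0 => by simpa [h] using hdeg i
  refine LinearMap.eqOn_span' (g := leval a) ?_ hspan
  rintro _ ⟨m, hm, rfl⟩
  simp [kernelPoly, polyInner_orthonormal hμ horth, Nat.lt_succ_iff.2 hm]

lemma eq_zero_of_polyInner_self_eq_zero {n : ℕ} {p : ℂ[X]} (hp : p.degree ≤ n)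
    (h : polyInner hμ p p = 0) : p = 0 := by
  have hae : ∀ᵐ z ∂μ, p.eval z = 0 := by
    have h0 : ∫ z, ‖p.eval z‖ ^ 2 ∂μ = 0 := by rw [integral_norm_sq_eval hμ, h, Complex.zero_re]
    filter_upwards [(integral_eq_zero_iff_of_nonneg (fun z => by positivity)
      (integrable_of_continuous hμ (by fun_prop))).1 h0] with z hz
    simpa using hz
  refine Polynomial.funext fun a => ?_
  rw [eval_zero, ← polyInner_kernelPoly hdeg hμ horth a hp, ← conj_polyInner, polyInner_apply,
    integral_eq_zero_of_ae, map_zero]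
  filter_upwards [hae] with z hz
  simp [hz]

end Kernel

section ParaOrthogonal

variable {φ : ℕ → ℂ[X]}

noncomputable def paraOrthoPoly (φ : ℕ → ℂ[X]) (n : ℕ) (w : ℂ) : ℂ[X] :=
  (1 - C (conj w) * X) * kernelPoly φ n w

lemma eval_paraOrthoPoly (n : ℕ) (w z : ℂ) :
    (paraOrthoPoly φ n w).eval z = paraOrtho φ n w z := by
  simp [paraOrthoPoly, paraOrtho, eval_kernelPoly]

variable (hdeg : ∀ k, (φ k).degree = (k : ℕ))
include hdeg

lemma paraOrthoPoly_ne_zero (n : ℕ) (w : ℂ) : paraOrthoPoly φ n w ≠ 0 := by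
  refine mul_ne_zero (fun h => by simpa using congrArg (eval 0) h) fun h => ?_
  exact christoffelK_self_ne_zero hdeg n w (by rw [← eval_kernelPoly, h, eval_zero])

lemma degree_paraOrthoPoly_divByMonic_le (n : ℕ) (w ζ : ℂ) :
    (paraOrthoPoly φ n w /ₘ (X - C ζ)).degree ≤ n := by
  have h1 : (1 - C (conj w) * X).natDegree ≤ 1 := by compute_degree
  have hK := natDegree_le_of_degree_le (degree_kernelPoly_le hdeg n w)
  have hB : (paraOrthoPoly φ n w).natDegree ≤ n + 1 := natDegree_mul_le.trans (by omega)
  refine degree_le_of_natDegree_le ?_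
  rw [natDegree_divByMonic _ (monic_X_sub_C ζ), natDegree_X_sub_C]
  omega

variable {μ : Measure ℂ} [IsFiniteMeasure μ] (hμ : μ (Metric.sphere (0 : ℂ) 1)ᶜ = 0)
  (horth : ∀ k m, ∫ z, (φ k).eval z * conj ((φ m).eval z) ∂μ = if k = m then 1 else 0)
include hμ horth

lemma polyInner_X_mul_paraOrthoPoly {n : ℕ} (w : ℂ) {r : ℂ[X]} (hr : r.degree < n) :
    polyInner hμ (X * r) (paraOrthoPoly φ n w) = 0 := by
  have hXr : (X * r).degree ≤ (n : WithBot ℕ) := by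
    rw [X_mul, degree_mul_X]
    exact Nat.WithBot.add_one_le_of_lt hr
  rw [show paraOrthoPoly φ n w = (1 - C (conj w) * X) * kernelPoly φ n w from rfl, sub_mul,
    one_mul, mul_assoc, ← smul_eq_C_mul, map_sub, map_smul,
    polyInner_X_mul_X_mul, ← conj_polyInner hμ _ (X * r), ← conj_polyInner hμ _ r,
    polyInner_kernelPoly hdeg hμ horth w hXr, polyInner_kernelPoly hdeg hμ horth w hr.le]
  simp

lemma polyInner_paraOrthoPoly_divByMonic {n : ℕ} {w ζ : ℂ} (hζ : ‖ζ‖ = 1)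
    (hB : (paraOrthoPoly φ n w).IsRoot ζ) {q : ℂ[X]} (hq : q.degree ≤ n) (hqζ : q.IsRoot ζ) :
    polyInner hμ q (paraOrthoPoly φ n w /ₘ (X - C ζ)) = 0 := by
  have hs : (q /ₘ (X - C ζ)).degree < n := by
    rcases eq_or_ne q 0 with rfl | hq0
    · simp
    · exact (degree_divByMonic_lt _ _ hq0 (by rw [degree_X_sub_C]; exact zero_lt_one)).trans_le hq
  rw [← mul_divByMonic_eq_iff_isRoot.2 hqζ, polyInner_X_sub_C_mul hμ hζ,
    mul_divByMonic_eq_iff_isRoot.2 hB, polyInner_X_mul_paraOrthoPoly hdeg hμ horth w hs, mul_zero]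

lemma christoffelK_eq_zero_of_paraOrtho_eq_zero {n : ℕ} {w ζ ζ' : ℂ} (hζ : ‖ζ‖ = 1)
    (hne : ζ' ≠ ζ) (h : paraOrtho φ n w ζ = 0) (h' : paraOrtho φ n w ζ' = 0) :
    christoffelK φ n ζ ζ' = 0 := by
  have hB : (paraOrthoPoly φ n w).IsRoot ζ := by rwa [IsRoot, eval_paraOrthoPoly]
  set g := paraOrthoPoly φ n w /ₘ (X - C ζ)
  have hBg : (X - C ζ) * g = paraOrthoPoly φ n w := mul_divByMonic_eq_iff_isRoot.2 hB
  have hg' : g.eval ζ' = 0 := by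
    have := congrArg (eval ζ') hBg
    rw [eval_mul, eval_sub, eval_X, eval_C, eval_paraOrthoPoly, h'] at this
    exact (mul_eq_zero.1 this).resolve_left (sub_ne_zero.2 hne)
  set r := christoffelK φ n ζ ζ • g - g.eval ζ • kernelPoly φ n ζ with hr
  have hr_deg : r.degree ≤ n := (degree_sub_le _ _).trans <| max_le
    ((degree_smul_le _ _).trans (degree_paraOrthoPoly_divByMonic_le hdeg n w ζ))
    ((degree_smul_le _ _).trans (degree_kernelPoly_le hdeg n ζ))
  have hr_root : r.IsRoot ζ := by simp [r, eval_kernelPoly, mul_comm]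
  have hr0 : r = 0 := by
    refine eq_zero_of_polyInner_self_eq_zero hdeg hμ horth hr_deg ?_
    nth_rw 2 [hr]
    rw [map_sub, map_smul, map_smul, polyInner_paraOrthoPoly_divByMonic hdeg hμ horth hζ hB hr_deg
      hr_root, ← conj_polyInner, polyInner_kernelPoly hdeg hμ horth ζ hr_deg, hr_root.eq_zero]
    simp
  have hgK : g.eval ζ * christoffelK φ n ζ ζ' = 0 := by
    have := congrArg (eval ζ') (sub_eq_zero.1 hr0)
    simpa [eval_kernelPoly, hg'] using this.symm
  refine (mul_eq_zero.1 hgK).resolve_left fun hgζ => paraOrthoPoly_ne_zero hdeg n w ?_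
  rw [hr, hgζ, zero_smul, sub_zero, smul_eq_zero] at hr0
  rw [← hBg, hr0.resolve_left (christoffelK_self_ne_zero hdeg n ζ), mul_zero]

end ParaOrthogonal

section Lagrange

variable {φ : ℕ → ℂ[X]} {n : ℕ} (ζ : Fin (n + 1) → ℂ)

noncomputable def lagrangeBasis (φ : ℕ → ℂ[X]) (n : ℕ) (ζ : Fin (n + 1) → ℂ) (j : Fin (n + 1)) :
    ℂ[X] :=
  (christoffelK φ n (ζ j) (ζ j))⁻¹ • kernelPoly φ n (ζ j)

lemma eval_lagrangeBasis (j : Fin (n + 1)) (z : ℂ) :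
    (lagrangeBasis φ n ζ j).eval z = ellFun φ n ζ j z := by
  simp [lagrangeBasis, ellFun, eval_kernelPoly, div_eq_inv_mul]

lemma lagrangeInterp_eq_eval (f : ℂ → ℂ) (z : ℂ) :
    lagrangeInterp φ n ζ f z = (∑ j, f (ζ j) • lagrangeBasis φ n ζ j).eval z := by
  simp [lagrangeInterp, eval_finsetSum, eval_lagrangeBasis]

lemma continuous_lagrangeInterp (f : ℂ → ℂ) : Continuous (lagrangeInterp φ n ζ f) := by
  simpa only [← funext (lagrangeInterp_eq_eval ζ f)] using
    (∑ j, f (ζ j) • lagrangeBasis φ n ζ j).continuous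

variable (hdeg : ∀ k, (φ k).degree = (k : ℕ))
include hdeg

lemma degree_lagrangeBasis_le (j : Fin (n + 1)) : (lagrangeBasis φ n ζ j).degree ≤ n :=
  (degree_smul_le _ _).trans (degree_kernelPoly_le hdeg n _)

variable {μ : Measure ℂ} [IsFiniteMeasure μ] (hμ : μ (Metric.sphere (0 : ℂ) 1)ᶜ = 0)
  (horth : ∀ k m, ∫ z, (φ k).eval z * conj ((φ m).eval z) ∂μ = if k = m then 1 else 0)
  {w : ℂ} {ζ} (hζT : ∀ j, ζ j ∈ Metric.sphere (0 : ℂ) 1) (hζinj : Function.Injective ζ)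
  (hζ0 : ∀ j, paraOrtho φ n w (ζ j) = 0)
include hμ horth hζT hζinj hζ0

lemma ellFun_node (j k : Fin (n + 1)) : ellFun φ n ζ j (ζ k) = if j = k then 1 else 0 := by
  rcases eq_or_ne j k with rfl | hjk
  · simp [ellFun, christoffelK_self_ne_zero hdeg]
  · rw [if_neg hjk, ellFun, christoffelK_eq_zero_of_paraOrtho_eq_zero hdeg hμ horth
      (mem_sphere_zero_iff_norm.1 (hζT j)) (hζinj.ne hjk.symm) (hζ0 j) (hζ0 k), zero_div]

lemma sum_smul_lagrangeBasis {q : ℂ[X]} (hq : q.degree ≤ n) :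
    ∑ j, q.eval (ζ j) • lagrangeBasis φ n ζ j = q := by
  have hsum : (∑ j, q.eval (ζ j) • lagrangeBasis φ n ζ j).degree ≤ n :=
    (degree_sum_le _ _).trans <| Finset.sup_le fun j _ =>
      (degree_smul_le _ _).trans (degree_lagrangeBasis_le ζ hdeg j)
  refine eq_of_degree_sub_lt_of_eval_index_eq Finset.univ hζinj.injOn ?_ fun k _ => ?_
  · rw [Finset.card_univ, Fintype.card_fin]
    exact (degree_sub_le _ _).trans_lt <|
      (max_le hsum hq).trans_lt (by exact_mod_cast n.lt_succ_self)
  · simp [eval_finsetSum, eval_lagrangeBasis, ellFun_node hdeg hμ horth hζT hζinj hζ0]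

lemma polyInner_lagrangeBasis_of_ne {j k : Fin (n + 1)} (hjk : j ≠ k) :
    polyInner hμ (lagrangeBasis φ n ζ j) (lagrangeBasis φ n ζ k) = 0 := by
  nth_rw 1 [lagrangeBasis]
  rw [map_smulₛₗ, LinearMap.smul_apply, polyInner_kernelPoly hdeg hμ horth _
    (degree_lagrangeBasis_le ζ hdeg k), eval_lagrangeBasis,
    ellFun_node hdeg hμ horth hζT hζinj hζ0, if_neg hjk.symm, smul_zero]

lemma integral_norm_sq_eval_sum_smul_lagrangeBasis_le (c : Fin (n + 1) → ℂ) {ε : ℝ}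
    (hc : ∀ j, ‖c j‖ ≤ ε) :
    ∫ z, ‖(∑ j, c j • lagrangeBasis φ n ζ j).eval z‖ ^ 2 ∂μ ≤ (μ Set.univ).toReal * ε ^ 2 := by
  have hpythagoras : ∀ c : Fin (n + 1) → ℂ, ∫ z, ‖(∑ j, c j • lagrangeBasis φ n ζ j).eval z‖ ^ 2 ∂μ
      = ∑ j, ‖c j‖ ^ 2 * ∫ z, ‖(lagrangeBasis φ n ζ j).eval z‖ ^ 2 ∂μ := fun c => by
    rw [integral_norm_sq_eval_sum hμ _ _ fun i _ j _ hij => by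
      simp [polyInner_lagrangeBasis_of_ne hdeg hμ horth hζT hζinj hζ0 hij]]
    simp [mul_pow, integral_const_mul]
  have hsum_one : ∑ j, lagrangeBasis φ n ζ j = 1 := by
    simpa using sum_smul_lagrangeBasis hdeg hμ horth hζT hζinj hζ0 (q := 1)
      (degree_one_le.trans (by exact_mod_cast n.zero_le))
  calc ∫ z, ‖(∑ j, c j • lagrangeBasis φ n ζ j).eval z‖ ^ 2 ∂μ
      = ∑ j, ‖c j‖ ^ 2 * ∫ z, ‖(lagrangeBasis φ n ζ j).eval z‖ ^ 2 ∂μ := hpythagoras c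
    _ ≤ ∑ j, ε ^ 2 * ∫ z, ‖(lagrangeBasis φ n ζ j).eval z‖ ^ 2 ∂μ := by
      gcongr with j
      exact hc j
    _ = ε ^ 2 * ∑ j, ‖(1 : ℂ)‖ ^ 2 * ∫ z, ‖(lagrangeBasis φ n ζ j).eval z‖ ^ 2 ∂μ := by
      simp [Finset.mul_sum]
    _ = ε ^ 2 * ∫ z, ‖(∑ j, (1 : ℂ) • lagrangeBasis φ n ζ j).eval z‖ ^ 2 ∂μ := by
      rw [hpythagoras]
    _ = (μ Set.univ).toReal * ε ^ 2 := by
      simp [hsum_one, mul_comm, measureReal_def]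

lemma integral_norm_sq_lagrangeInterp_sub_le (f : ℂ → ℂ) {P : ℂ[X]} (hP : P.degree ≤ n) {ε : ℝ}
    (hε : ∀ j, ‖f (ζ j) - P.eval (ζ j)‖ ≤ ε) :
    ∫ z, ‖lagrangeInterp φ n ζ f z - P.eval z‖ ^ 2 ∂μ ≤ (μ Set.univ).toReal * ε ^ 2 := by
  have hdiff : ∀ z, lagrangeInterp φ n ζ f z - P.eval z
      = (∑ j, (f (ζ j) - P.eval (ζ j)) • lagrangeBasis φ n ζ j).eval z := fun z => by
    conv_lhs => rw [lagrangeInterp_eq_eval, ← sum_smul_lagrangeBasis hdeg hμ horth hζT hζinj hζ0 hP]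
    simp [sub_smul, eval_finsetSum]
  simpa only [hdiff] using
    integral_norm_sq_eval_sum_smul_lagrangeBasis_le hdeg hμ horth hζT hζinj hζ0 _ hε

end Lagrange

lemma integral_norm_sub_sq_le {α E : Type*} [MeasurableSpace α] [NormedAddCommGroup E]
    {μ : Measure α} [IsFiniteMeasure μ] {u v w : α → E} {ε : ℝ}
    (hwv : Integrable (fun x => ‖w x - v x‖ ^ 2) μ) (huv : ∀ᵐ x ∂μ, ‖u x - v x‖ ≤ ε) :
    ∫ x, ‖u x - w x‖ ^ 2 ∂μ ≤ 2 * (μ Set.univ).toReal * ε ^ 2 + 2 * ∫ x, ‖w x - v x‖ ^ 2 ∂μ := by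
  calc ∫ x, ‖u x - w x‖ ^ 2 ∂μ ≤ ∫ x, (2 * ε ^ 2 + 2 * ‖w x - v x‖ ^ 2) ∂μ := by
        refine integral_mono_of_nonneg (.of_forall fun x => by positivity)
          ((integrable_const _).add (hwv.const_mul 2)) ?_
        filter_upwards [huv] with x hx
        have htri : ‖u x - w x‖ ≤ ‖u x - v x‖ + ‖w x - v x‖ := by
          simpa only [norm_sub_rev (v x)] using norm_sub_le_norm_sub_add_norm_sub (u x) (v x) (w x)
        have hsq : ‖u x - v x‖ ^ 2 ≤ ε ^ 2 := pow_le_pow_left₀ (norm_nonneg _) hx 2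
        nlinarith [add_sq_le (a := ‖u x - v x‖) (b := ‖w x - v x‖), norm_nonneg (u x - w x)]
    _ = 2 * (μ Set.univ).toReal * ε ^ 2 + 2 * ∫ x, ‖w x - v x‖ ^ 2 ∂μ := by
        rw [integral_add (integrable_const _) (hwv.const_mul 2), integral_const,
          integral_const_mul, smul_eq_mul, measureReal_def]
        ring

theorem lagrangeInterp_diskAlgebra_key_estimate_general
    (μ : Measure ℂ) [IsFiniteMeasure μ]
    (hμT : μ (Metric.sphere (0 : ℂ) 1)ᶜ = 0)
    (φ : ℕ → Polynomial ℂ)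
    (hdeg : ∀ k, (φ k).degree = (k : ℕ))
    (horth : ∀ k m, ∫ z, (φ k).eval z * conj ((φ m).eval z) ∂μ
        = if k = m then 1 else 0)
    (w : ℕ → ℂ)
    (ζ : (n : ℕ) → Fin (n + 1) → ℂ)
    (hζT : ∀ n j, ζ n j ∈ Metric.sphere (0 : ℂ) 1)
    (hζinj : ∀ n, Function.Injective (ζ n))
    (hζ0 : ∀ n j, paraOrtho φ n (w n) (ζ n j) = 0)
    (f : ℂ → ℂ)
    (hfc : ContinuousOn f (Metric.closedBall (0 : ℂ) 1))
    (P : ℕ → Polynomial ℂ) (hP : ∀ n, (P n).degree ≤ n)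
    (hPf : Tendsto
      (fun n => sSup ((fun z => ‖f z - (P n).eval z‖) '' Metric.sphere (0 : ℂ) 1))
      atTop (𝓝 0)) :
    (∀ n, ∫ z, ‖lagrangeInterp φ n (ζ n) f z - (P n).eval z‖ ^ 2 ∂μ
        ≤ (μ Set.univ).toReal *
          (sSup ((fun z => ‖f z - (P n).eval z‖) '' Metric.sphere (0 : ℂ) 1)) ^ 2) ∧
    Tendsto (fun n => ∫ z, ‖f z - lagrangeInterp φ n (ζ n) f z‖ ^ 2 ∂μ)
      atTop (𝓝 0) := by
  set ε := fun n => sSup ((fun z => ‖f z - (P n).eval z‖) '' Metric.sphere (0 : ℂ) 1)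
  have hε : ∀ n, ∀ z ∈ Metric.sphere (0 : ℂ) 1, ‖f z - (P n).eval z‖ ≤ ε n := fun n z hz =>
    le_csSup ((isCompact_sphere 0 1).bddAbove_image
      ((hfc.mono Metric.sphere_subset_closedBall).sub (P n).continuous.continuousOn).norm)
      ⟨z, hz, rfl⟩
  have hkey : ∀ n, ∫ z, ‖lagrangeInterp φ n (ζ n) f z - (P n).eval z‖ ^ 2 ∂μ
      ≤ (μ Set.univ).toReal * ε n ^ 2 := fun n =>
    integral_norm_sq_lagrangeInterp_sub_le hdeg hμT horth (hζT n) (hζinj n) (hζ0 n) f (hP n)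
      fun j => hε n _ (hζT n j)
  refine ⟨hkey, squeeze_zero (fun n => integral_nonneg fun z => by positivity) (fun n => ?_)
    (by simpa using (hPf.pow 2).const_mul (4 * (μ Set.univ).toReal))⟩
  calc ∫ z, ‖f z - lagrangeInterp φ n (ζ n) f z‖ ^ 2 ∂μ
      ≤ 2 * (μ Set.univ).toReal * ε n ^ 2
        + 2 * ∫ z, ‖lagrangeInterp φ n (ζ n) f z - (P n).eval z‖ ^ 2 ∂μ :=
        integral_norm_sub_sq_le
          (integrable_of_continuous hμT
            (((continuous_lagrangeInterp (ζ n) f).sub (P n).continuous).norm.pow 2))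
          (by filter_upwards [mem_ae_iff.2 hμT] with z hz using hε n z hz)
    _ ≤ 4 * (μ Set.univ).toReal * ε n ^ 2 := by linarith [hkey n]

/-- **Key estimate in the proof of Theorem 2.** If `f` is in the disk algebra and `{P_n}` is a
sequence of polynomials with `deg P_n ≤ n` converging uniformly to `f` on `T`, then
`∫_T |L_n(f) − P_n|² dμ ≤ μ(T) · (max_{z∈T} |f(z) − P_n(z)|)²`, and consequently
`∫_T |f − L_n(f)|² dμ → 0` as `n → ∞`. -/
theorem lagrangeInterp_diskAlgebra_key_estimate
    (μ : Measure ℂ) [IsFiniteMeasure μ]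
    (hμT : μ (Metric.sphere (0 : ℂ) 1)ᶜ = 0)
    (hμinf : ∀ s : Finset ℂ, μ ((s : Set ℂ)ᶜ) ≠ 0)
    (φ : ℕ → Polynomial ℂ)
    (hdeg : ∀ k, (φ k).degree = (k : ℕ))
    (hlead : ∀ k, 0 < ((φ k).leadingCoeff).re ∧ ((φ k).leadingCoeff).im = 0)
    (horth : ∀ k m, ∫ z, (φ k).eval z * conj ((φ m).eval z) ∂μ
        = if k = m then 1 else 0)
    (w : ℕ → ℂ) (hw : ∀ n, w n ∈ Metric.sphere (0 : ℂ) 1)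
    (ζ : (n : ℕ) → Fin (n + 1) → ℂ)
    (hζT : ∀ n j, ζ n j ∈ Metric.sphere (0 : ℂ) 1)
    (hζinj : ∀ n, Function.Injective (ζ n))
    (hζ0 : ∀ n j, paraOrtho φ n (w n) (ζ n j) = 0)
    (f : ℂ → ℂ)
    (hfc : ContinuousOn f (Metric.closedBall (0 : ℂ) 1))
    (hfd : DifferentiableOn ℂ f (Metric.ball (0 : ℂ) 1))
    (P : ℕ → Polynomial ℂ) (hP : ∀ n, (P n).degree ≤ n)
    (hPf : Tendsto
      (fun n => sSup ((fun z => ‖f z - (P n).eval z‖) '' Metric.sphere (0 : ℂ) 1))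
      atTop (𝓝 0)) :
    (∀ n, ∫ z, ‖lagrangeInterp φ n (ζ n) f z - (P n).eval z‖ ^ 2 ∂μ
        ≤ (μ Set.univ).toReal *
          (sSup ((fun z => ‖f z - (P n).eval z‖) '' Metric.sphere (0 : ℂ) 1)) ^ 2) ∧
    Tendsto (fun n => ∫ z, ‖f z - lagrangeInterp φ n (ζ n) f z‖ ^ 2 ∂μ)
      atTop (𝓝 0) :=
  lagrangeInterp_diskAlgebra_key_estimate_general μ hμT φ hdeg horth w ζ hζT hζinj hζ0 f hfc P hP
    hPf
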